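/- For every bounded linear operator A on a complex Hilbert space and every μ with 0 ≤ μ ≤ 2, w(A)² ≤ (1/4)·‖μ|A|² + (2−μ)|A*|²‖ + (1/8)·‖|A|² + |A*|²‖ + (1/4)·w(A²). -/

import Mathlib

/-!
For a unit vector `x` put `t = |⟪A x, x⟫|`, `a = ‖A x‖`, `b = ‖A* x‖`. Cauchy–Schwarz gives
`t ≤ a` and `t ≤ b`, hence `t² ≤ (μ a² + (2 - μ) b²) / 2`, while Buzano's inequality applied to
`⟪A x, x⟫ ⟪x, A* x⟫` gives `2 t² ≤ a b + |⟪A² x, x⟫| ≤ (a² + b²) / 2 + |⟪A² x, x⟫|`. Averaging the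
two bounds and noting `μ a² + (2 - μ) b² = Re ⟪(μ |A|² + (2 - μ) |A*|²) x, x⟫` gives the
inequality at `x`; taking the supremum over `x` finishes the proof.
-/

open scoped InnerProductSpace

variable {H : Type*} [NormedAddCommGroup H] [InnerProductSpace ℂ H] [CompleteSpace H]

/-- The numerical radius of a bounded linear operator. -/
noncomputable def numRad (A : H →L[ℂ] H) : ℝ :=
  sSup {r : ℝ | ∃ x : H, ‖x‖ = 1 ∧ r = ‖⟪A x, x⟫_ℂ‖}

/-- The absolute value `|A| = (A*A)^(1/2)` of a bounded linear operator. -/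
noncomputable def oabs (A : H →L[ℂ] H) : H →L[ℂ] H :=
  CFC.sqrt (ContinuousLinearMap.adjoint A * A)

/-- The spectral radius (as a real number). -/
noncomputable def specRad (A : H →L[ℂ] H) : ℝ := (spectralRadius ℂ A).toReal

open ContinuousLinearMap

section RCLike

variable {𝕜 E : Type*} [RCLike 𝕜] [NormedAddCommGroup E] [InnerProductSpace 𝕜 E]

theorem norm_inner_mul_inner_le_buzano {e : E} (he : ‖e‖ = 1) (u v : E) :
    2 * ‖⟪u, e⟫_𝕜 * ⟪e, v⟫_𝕜‖ ≤ ‖u‖ * ‖v‖ + ‖⟪u, v⟫_𝕜‖ := by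
  set r := (2 * ⟪e, u⟫_𝕜) • e - u
  have hr : (𝕜 ∙ e).reflection u = r := by
    rw [Submodule.reflection_apply, Submodule.starProjection_unit_singleton 𝕜 he, two_nsmul,
      ← add_smul, ← two_mul]
  have hinner : ⟪r, v⟫_𝕜 = 2 * (⟪u, e⟫_𝕜 * ⟪e, v⟫_𝕜) - ⟪u, v⟫_𝕜 := by
    rw [inner_sub_left, inner_smul_left, map_mul, inner_conj_symm, map_ofNat, mul_assoc]
  calc 2 * ‖⟪u, e⟫_𝕜 * ⟪e, v⟫_𝕜‖ = ‖⟪r, v⟫_𝕜 + ⟪u, v⟫_𝕜‖ := by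
        rw [hinner, sub_add_cancel, norm_mul, norm_mul, norm_mul, RCLike.norm_ofNat]
    _ ≤ ‖r‖ * ‖v‖ + ‖⟪u, v⟫_𝕜‖ := (norm_add_le _ _).trans (by gcongr; exact norm_inner_le_norm _ _)
    _ = ‖u‖ * ‖v‖ + ‖⟪u, v⟫_𝕜‖ := by rw [← hr, LinearIsometryEquiv.norm_map]

theorem norm_inner_apply_self_le_opNorm (T : E →L[𝕜] E) {x : E} (hx : ‖x‖ = 1) :
    ‖⟪T x, x⟫_𝕜‖ ≤ ‖T‖ :=
  calc ‖⟪T x, x⟫_𝕜‖ ≤ ‖T x‖ * ‖x‖ := norm_inner_le_norm _ _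
    _ ≤ ‖T‖ * ‖x‖ * ‖x‖ := by gcongr; exact T.le_opNorm x
    _ = ‖T‖ := by rw [hx, mul_one, mul_one]

end RCLike

theorem sq_le_of_le_of_le_of_two_mul_sq_le {t a b c μ : ℝ} (hμ₀ : 0 ≤ μ) (hμ₂ : μ ≤ 2)
    (ht : 0 ≤ t) (hta : t ≤ a) (htb : t ≤ b) (h : 2 * t ^ 2 ≤ a * b + c) :
    t ^ 2 ≤ (μ * a ^ 2 + (2 - μ) * b ^ 2) / 4 + (a ^ 2 + b ^ 2) / 8 + c / 4 := by
  have hta2 : t ^ 2 ≤ a ^ 2 := pow_le_pow_left₀ ht hta 2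
  have htb2 : t ^ 2 ≤ b ^ 2 := pow_le_pow_left₀ ht htb 2
  have hweighted : 2 * t ^ 2 ≤ μ * a ^ 2 + (2 - μ) * b ^ 2 := by nlinarith
  nlinarith [sq_nonneg (a - b)]

section NumericalRadius

variable {E : Type*} [NormedAddCommGroup E] [InnerProductSpace ℂ E]

theorem norm_inner_apply_self_le_numRad (A : E →L[ℂ] E) {x : E} (hx : ‖x‖ = 1) :
    ‖⟪A x, x⟫_ℂ‖ ≤ numRad A :=
  le_csSup ⟨‖A‖, fun _ ⟨_, hy, hr⟩ ↦ hr ▸ norm_inner_apply_self_le_opNorm A hy⟩ ⟨x, hx, rfl⟩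

theorem numRad_nonneg (A : E →L[ℂ] E) : 0 ≤ numRad A :=
  Real.sSup_nonneg fun _ ⟨_, _, hr⟩ ↦ hr ▸ norm_nonneg _

theorem numRad_sq_le_of_forall {A : E →L[ℂ] E} {R : ℝ} (hR : 0 ≤ R)
    (h : ∀ x : E, ‖x‖ = 1 → ‖⟪A x, x⟫_ℂ‖ ^ 2 ≤ R) : numRad A ^ 2 ≤ R := by
  have : numRad A ≤ √R :=
    Real.sSup_le (fun r ⟨x, hx, hr⟩ ↦ hr ▸ Real.le_sqrt_of_sq_le (h x hx)) (Real.sqrt_nonneg R)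
  simpa [Real.sq_sqrt hR] using pow_le_pow_left₀ (numRad_nonneg A) this 2

end NumericalRadius

theorem oabs_sq (A : H →L[ℂ] H) : oabs A ^ 2 = adjoint A * A :=
  CFC.sq_sqrt _ (star_eq_adjoint A ▸ star_mul_self_nonneg A)

theorem oabs_adjoint_sq (A : H →L[ℂ] H) : oabs (adjoint A) ^ 2 = A * adjoint A := by
  rw [oabs_sq, adjoint_adjoint]

theorem smul_norm_sq_add_smul_norm_adjoint_sq_le (A : H →L[ℂ] H) (α β : ℝ) {x : H}
    (hx : ‖x‖ = 1) :
    α * ‖A x‖ ^ 2 + β * ‖adjoint A x‖ ^ 2 ≤ ‖α • (adjoint A * A) + β • (A * adjoint A)‖ := by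
  have hre : RCLike.re ⟪(α • (adjoint A * A) + β • (A * adjoint A)) x, x⟫_ℂ
      = α * ‖A x‖ ^ 2 + β * ‖adjoint A x‖ ^ 2 := by
    rw [apply_norm_sq_eq_inner_adjoint_left, apply_norm_sq_eq_inner_adjoint_left (adjoint A),
      adjoint_adjoint, add_apply, smul_apply, smul_apply, RCLike.real_smul_eq_coe_smul (K := ℂ) α,
      RCLike.real_smul_eq_coe_smul (K := ℂ) β, inner_add_left, inner_smul_left, inner_smul_left]
    simp
  exact hre ▸ (RCLike.re_le_norm _).trans (norm_inner_apply_self_le_opNorm _ hx)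

theorem norm_inner_apply_self_sq_le (A : H →L[ℂ] H) {μ : ℝ} (hμ : 0 ≤ μ ∧ μ ≤ 2) {x : H}
    (hx : ‖x‖ = 1) :
    ‖⟪A x, x⟫_ℂ‖ ^ 2 ≤
      (1 / 4) * ‖μ • oabs A ^ 2 + (2 - μ) • oabs (adjoint A) ^ 2‖
        + (1 / 8) * ‖oabs A ^ 2 + oabs (adjoint A) ^ 2‖ + (1 / 4) * ‖⟪(A ^ 2) x, x⟫_ℂ‖ := by
  have hta : ‖⟪A x, x⟫_ℂ‖ ≤ ‖A x‖ := by simpa [hx] using norm_inner_le_norm (𝕜 := ℂ) (A x) x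
  have htb : ‖⟪A x, x⟫_ℂ‖ ≤ ‖adjoint A x‖ := by
    simpa [hx, adjoint_inner_right] using norm_inner_le_norm (𝕜 := ℂ) x (adjoint A x)
  have hbuzano : 2 * ‖⟪A x, x⟫_ℂ‖ ^ 2 ≤ ‖A x‖ * ‖adjoint A x‖ + ‖⟪(A ^ 2) x, x⟫_ℂ‖ := by
    simpa [adjoint_inner_right, sq, norm_mul] using
      norm_inner_mul_inner_le_buzano (𝕜 := ℂ) hx (A x) (adjoint A x)
  have hN₁ := smul_norm_sq_add_smul_norm_adjoint_sq_le A μ (2 - μ) hx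
  have hN₂ := smul_norm_sq_add_smul_norm_adjoint_sq_le A 1 1 hx
  rw [one_smul, one_smul] at hN₂
  rw [oabs_sq, oabs_adjoint_sq]
  linarith [sq_le_of_le_of_le_of_two_mul_sq_le hμ.1 hμ.2 (norm_nonneg _) hta htb hbuzano]

theorem stmt3 (A : H →L[ℂ] H) (μ : ℝ) (hμ : 0 ≤ μ ∧ μ ≤ 2) :
    numRad A ^ 2 ≤
      (1 / 4) * ‖μ • oabs A ^ 2 + (2 - μ) • oabs (ContinuousLinearMap.adjoint A) ^ 2‖
        + (1 / 8) * ‖oabs A ^ 2 + oabs (ContinuousLinearMap.adjoint A) ^ 2‖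
        + (1 / 4) * numRad (A ^ 2) := by
  refine numRad_sq_le_of_forall (by positivity [numRad_nonneg (A ^ 2)]) fun x hx ↦ ?_
  have hW := norm_inner_apply_self_le_numRad (A ^ 2) hx
  linarith [norm_inner_apply_self_sq_le A hμ hx]
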